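/- arXiv:2110.12314 — 5 statements merged into one kernel-verified Lean document; each statement's English description precedes it below -/
import Mathlib

section
/- Let F be a finite semifield. For any x₁, y₁, x₂, y₂ ∈ F with x₁ ≠ x₂, there exist a, b ∈ F with y₁ = a·x₁ + b and y₂ = a·x₂ + b. -/
theorem map_sub_of_map_add {F : Type*} [AddCommGroup F] (f : F → F)
    (hf : ∀ x y : F, f (x + y) = f x + f y) (x y : F) : f (x - y) = f x - f y :=
  (AddMonoidHom.mk' f hf).map_sub x y

theorem stmt_7_general {F : Type*} [AddCommGroup F]
    (mul : F → F → F)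
    (hldist : ∀ a b c : F, mul a (b + c) = mul a b + mul a c)
    (hsolve_r : ∀ a b : F, a ≠ 0 → ∃! y : F, mul y a = b) :
    ∀ x₁ y₁ x₂ y₂ : F, x₁ ≠ x₂ →
      ∃ a b : F, y₁ = mul a x₁ + b ∧ y₂ = mul a x₂ + b := by
  intro x₁ y₁ x₂ y₂ hne
  obtain ⟨a, hslope, -⟩ := hsolve_r (x₁ - x₂) (y₁ - y₂) (sub_ne_zero.mpr hne)
  rw [map_sub_of_map_add (mul a) (hldist a)] at hslope
  refine ⟨a, y₁ - mul a x₁, by abel, ?_⟩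
  rw [← sub_sub_cancel y₁ y₂, ← hslope]
  abel

/-- In a finite semifield `F`, for any `x₁ ≠ x₂` and any `y₁, y₂`, there is a
"line" `y = a·x + b` through `(x₁, y₁)` and `(x₂, y₂)`. -/
theorem stmt_7 {F : Type*} [Fintype F] [AddCommGroup F]
    (mul : F → F → F) (one : F) (hone : one ≠ 0)
    (hone_l : ∀ a : F, mul one a = a) (hone_r : ∀ a : F, mul a one = a)
    (hldist : ∀ a b c : F, mul a (b + c) = mul a b + mul a c)
    (hrdist : ∀ a b c : F, mul (a + b) c = mul a c + mul b c)
    (hsolve_l : ∀ a b : F, a ≠ 0 → ∃! x : F, mul a x = b)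
    (hsolve_r : ∀ a b : F, a ≠ 0 → ∃! y : F, mul y a = b) :
    ∀ x₁ y₁ x₂ y₂ : F, x₁ ≠ x₂ →
      ∃ a b : F, y₁ = mul a x₁ + b ∧ y₂ = mul a x₂ + b :=
  stmt_7_general mul hldist hsolve_r
end

section
/- Let F ⊆ A_n be a finite set containing 0 such that ‖x - y‖₁ = 2 for all distinct x, y ∈ F. Then either every nonzero element of F equals eᵢ - eⱼ for a common j (varying i), or every nonzero element equals eᵢ - eⱼ for a common i (varying j). Consequently, every such clique has size at most n + 1. -/
/-! A nonzero member `x` of the clique has coordinate sum `0` and distance `2` from `0`, so its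
positive and negative parts are unit vectors: `x = eᵢ - eⱼ` with `i ≠ j`. Two such roots
`eₐ - e_b` and `e_c - e_d` are at distance `2` only when their difference is again a root, which
forces `a = c` or `b = d`. A family of index pairs that pairwise agree in the first or in the
second entry agrees in one entry throughout, and such a star has at most `n + 1` members,
`0 = eⱼ - eⱼ` included. -/

open Finset

section

variable {ι : Type*} [DecidableEq ι]

lemma single_sub_single_sub_ne {a b c d : ι} (hab : a ≠ b) (hcd : c ≠ d) (hac : a ≠ c)
    (hbd : b ≠ d) (p q : ι) :
    (Pi.single a 1 - Pi.single b 1) - (Pi.single c 1 - Pi.single d 1) ≠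
      (Pi.single p 1 - Pi.single q 1 : ι → ℤ) := by
  intro h
  -- the difference equals `1 + [a = d]` at both `a` and `d`, while `eₚ - e_q` is `1` at most once
  have ha := congrFun h a
  have hd := congrFun h d
  simp only [Pi.sub_apply, Pi.single_apply, if_neg hab, if_neg hac, if_neg hbd.symm,
    if_neg hcd.symm] at ha hd
  split_ifs at ha hd <;> grind

variable [Fintype ι]

lemma exists_eq_single_of_sum_eq_one {f : ι → ℤ} (hf : 0 ≤ f) (h : ∑ i, f i = 1) :
    ∃ i, f = Pi.single i 1 := by
  obtain ⟨i, -, hi⟩ := exists_ne_zero_of_sum_ne_zero (h.trans_ne one_ne_zero)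
  have hle : f i ≤ 1 := h ▸ single_le_sum (fun k _ => hf k) (mem_univ i)
  refine ⟨i, funext fun k => ?_⟩
  have hfk : 0 ≤ f k := hf k
  rcases eq_or_ne k i with rfl | hki
  · simp only [Pi.single_eq_same]; omega
  · have hik := add_le_sum (fun k _ => hf k) (mem_univ i) (mem_univ k) hki.symm
    have hfi : 0 ≤ f i := hf i
    simp only [Pi.single_eq_of_ne hki]; omega

lemma exists_eq_single_sub_single {x : ι → ℤ} (h0 : ∑ k, x k = 0) (h2 : ∑ k, |x k| = 2) :
    ∃ i j, i ≠ j ∧ x = Pi.single i 1 - Pi.single j 1 := by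
  have hdiff : ∑ k, (x k)⁺ - ∑ k, (x k)⁻ = 0 := by
    simpa only [← sum_sub_distrib, posPart_sub_negPart] using h0
  have hsum : ∑ k, (x k)⁺ + ∑ k, (x k)⁻ = 2 := by
    simpa only [← sum_add_distrib, posPart_add_negPart] using h2
  obtain ⟨i, hi⟩ := exists_eq_single_of_sum_eq_one (f := x⁺) (posPart_nonneg x) (by
    simp only [Pi.posPart_apply]; omega)
  obtain ⟨j, hj⟩ := exists_eq_single_of_sum_eq_one (f := x⁻) (negPart_nonneg x) (by
    simp only [Pi.negPart_apply]; omega)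
  have hx : x = Pi.single i 1 - Pi.single j 1 := by rw [← hi, ← hj, posPart_sub_negPart]
  refine ⟨i, j, ?_, hx⟩
  rintro rfl
  simp [hx] at h2

lemma eq_or_eq_of_sum_abs_sub_eq_two {a b c d : ι} (hab : a ≠ b) (hcd : c ≠ d)
    (h : ∑ k, |(Pi.single a 1 - Pi.single b 1 - (Pi.single c 1 - Pi.single d 1) : ι → ℤ) k|
      = 2) :
    a = c ∨ b = d := by
  by_contra! hne
  obtain ⟨p, q, -, hpq⟩ := exists_eq_single_sub_single (by simp) h
  exact single_sub_single_sub_ne hab hcd hne.1 hne.2 p q hpq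

end

lemma exists_forall_eq_or_exists_forall_eq {α β γ : Type*} [Nonempty β] {s : Set α}
    {f : α → β} {g : α → γ} (h : ∀ x ∈ s, ∀ y ∈ s, f x = f y ∨ g x = g y) :
    (∃ b, ∀ x ∈ s, f x = b) ∨ (∃ c, ∀ x ∈ s, g x = c) := by
  rcases s.eq_empty_or_nonempty with rfl | ⟨x₀, hx₀⟩
  · exact .inl ⟨Classical.arbitrary β, by simp⟩
  by_cases hg : ∀ x ∈ s, g x = g x₀
  · exact .inr ⟨g x₀, hg⟩
  obtain ⟨y, hy, hgy⟩ : ∃ y ∈ s, g y ≠ g x₀ := by simpa using hg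
  have hfy : f y = f x₀ := (h y hy x₀ hx₀).resolve_right hgy
  refine .inl ⟨f x₀, fun z hz => ?_⟩
  by_contra hfz
  have hgz₀ : g z = g x₀ := (h z hz x₀ hx₀).resolve_left hfz
  have hgzy : g z = g y := (h z hz y hy).resolve_left (hfy ▸ hfz)
  exact hgy (hgzy.symm.trans hgz₀)

lemma Finset.card_le_card_of_forall_ne_zero_mem_range {α ι : Type*} [Fintype ι] [Zero α]
    {F : Finset α} {g : ι → α} (hg : 0 ∈ Set.range g)
    (h : ∀ x ∈ F, x ≠ 0 → x ∈ Set.range g) :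
    #F ≤ Fintype.card ι := by
  simpa using card_le_card_of_surjOn (s := univ) g fun x hx => by
    rcases eq_or_ne x 0 with rfl | hx0
    · simpa using hg
    · simpa using h x hx hx0

/-- Cliques (in the `ℓ¹`-distance-2 graph) in `Aₙ` containing `0` consist of
vectors `eᵢ - eⱼ` with a common `j` or with a common `i`; hence they have at
most `n + 1` elements. -/
theorem stmt_10 (n : ℕ) (F : Finset (Fin (n + 1) → ℤ))
    (hF : ∀ x ∈ F, ∑ i, x i = 0) (h0 : (0 : Fin (n + 1) → ℤ) ∈ F)
    (hclique : ∀ x ∈ F, ∀ y ∈ F, x ≠ y → ∑ i, |x i - y i| = 2) :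
    ((∃ j : Fin (n + 1), ∀ x ∈ F, x ≠ 0 →
        ∃ i : Fin (n + 1), x = Pi.single i (1 : ℤ) - Pi.single j 1) ∨
      (∃ i : Fin (n + 1), ∀ x ∈ F, x ≠ 0 →
        ∃ j : Fin (n + 1), x = Pi.single i (1 : ℤ) - Pi.single j 1)) ∧
    F.card ≤ n + 1 := by
  have hroot : ∀ x ∈ F, x ≠ 0 → ∃ i j, i ≠ j ∧ x = Pi.single i (1 : ℤ) - Pi.single j 1 :=
    fun x hx hx0 =>
      exists_eq_single_sub_single (hF x hx) (by simpa using hclique x hx 0 h0 hx0)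
  choose! I J hIJ hxIJ using hroot
  have hshare :
      ∀ x ∈ {x | x ∈ F ∧ x ≠ 0}, ∀ y ∈ {x | x ∈ F ∧ x ≠ 0}, J x = J y ∨ I x = I y := by
    rintro x ⟨hxF, hx0⟩ y ⟨hyF, hy0⟩
    rcases eq_or_ne x y with rfl | hxy
    · exact .inl rfl
    have h2 := hclique x hxF y hyF hxy
    rw [hxIJ x hxF hx0, hxIJ y hyF hy0] at h2
    exact (eq_or_eq_of_sum_abs_sub_eq_two (hIJ x hxF hx0) (hIJ y hyF hy0) h2).symm
  rcases exists_forall_eq_or_exists_forall_eq hshare with ⟨j, hj⟩ | ⟨i, hi⟩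
  · have hstar : ∀ x ∈ F, x ≠ 0 → ∃ i, x = Pi.single i (1 : ℤ) - Pi.single j 1 :=
      fun x hx hx0 => ⟨I x, hj x ⟨hx, hx0⟩ ▸ hxIJ x hx hx0⟩
    refine ⟨.inl ⟨j, hstar⟩, ?_⟩
    simpa using card_le_card_of_forall_ne_zero_mem_range
      (g := fun i => Pi.single i 1 - Pi.single j 1) ⟨j, sub_self _⟩
      fun x hx hx0 => (hstar x hx hx0).imp fun _ => Eq.symm
  · have hstar : ∀ x ∈ F, x ≠ 0 → ∃ j, x = Pi.single i (1 : ℤ) - Pi.single j 1 :=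
      fun x hx hx0 => ⟨J x, hi x ⟨hx, hx0⟩ ▸ hxIJ x hx hx0⟩
    refine ⟨.inr ⟨i, hstar⟩, ?_⟩
    simpa using card_le_card_of_forall_ne_zero_mem_range
      (g := fun j => Pi.single i 1 - Pi.single j 1) ⟨i, sub_self _⟩
      fun x hx hx0 => (hstar x hx hx0).imp fun _ => Eq.symm
end

section
/- Every maximal clique of size ≥ 3 in the graph on A_n with edges between points at ℓ¹-distance 2 is either {x + eᵢ : i ∈ [n+1]} for a unique x with coordinate sum -1, or {x - eᵢ : i ∈ [n+1]} for a unique x with coordinate sum 1; in particular, any 3-element clique is contained in a unique maximal clique of size n+1. -/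
/-!
Two points of `Aₙ` at `ℓ¹`-distance `2` differ by a root `e_p - e_q`. Hence three pairwise
adjacent points are `x + e_i, x + e_j, x + e_k` or `x - e_i, x - e_j, x - e_k` for distinct
`i, j, k`, and every point adjacent to all three lies in the same set `{x ± e_m}`, which is
itself a clique (negation exchanges the two kinds). So every clique through a triangle is
contained in one such simplex, and that simplex is the unique maximal clique containing it.
-/

/-- The `i`-th standard basis vector of `ℤ^{n+1}`. -/
def stdE (n : ℕ) (i : Fin (n + 1)) : Fin (n + 1) → ℤ := Pi.single i 1

/-- The lattice `Aₙ` as a set: integer vectors with coordinate sum zero. -/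
def latticeASet (n : ℕ) : Set (Fin (n + 1) → ℤ) := {x | ∑ i, x i = 0}

/-- `S` is a clique in the graph on `Aₙ` with edges between points at
`ℓ¹`-distance `2`. -/
def IsCliqueA (n : ℕ) (S : Set (Fin (n + 1) → ℤ)) : Prop :=
  S ⊆ latticeASet n ∧ ∀ x ∈ S, ∀ y ∈ S, x ≠ y → ∑ i, |x i - y i| = 2

/-- `S` is a maximal clique in this graph. -/
def IsMaxCliqueA (n : ℕ) (S : Set (Fin (n + 1) → ℤ)) : Prop :=
  IsCliqueA n S ∧ ∀ T, IsCliqueA n T → S ⊆ T → T = S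

open Finset
open scoped Pointwise

section PiSingle

variable {ι : Type*} [Fintype ι] [DecidableEq ι]

lemma exists_eq_piSingle_of_sum_eq_one {f : ι → ℤ} (hf : ∀ k, 0 ≤ f k)
    (hsum : ∑ k, f k = 1) :
    ∃ p, f = Pi.single p 1 := by
  obtain ⟨p, -, hp⟩ := exists_lt_of_sum_lt (s := univ) (f := 0) (g := f) (by simp [hsum])
  rw [Pi.zero_apply] at hp
  have hsplit : f p + ∑ k ∈ univ.erase p, f k = 1 := by
    rw [add_sum_erase _ _ (mem_univ p), hsum]
  have hrest : 0 ≤ ∑ k ∈ univ.erase p, f k := sum_nonneg fun k _ => hf k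
  have hzero : ∀ k ∈ univ.erase p, f k = 0 :=
    (sum_eq_zero_iff_of_nonneg fun k _ => hf k).1 (by omega)
  refine ⟨p, funext fun k => ?_⟩
  by_cases hk : k = p
  · subst hk
    rw [Pi.single_eq_same]
    omega
  · rw [Pi.single_eq_of_ne hk, hzero k (mem_erase.2 ⟨hk, mem_univ k⟩)]

/-- Splitting `v` into its positive and negative parts, each of which has sum `1`. -/
lemma exists_eq_piSingle_sub_piSingle {v : ι → ℤ} (hsum : ∑ k, v k = 0)
    (hnorm : ∑ k, |v k| = 2) :
    ∃ p q, p ≠ q ∧ v = Pi.single p 1 - Pi.single q 1 := by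
  have hdiff : ∑ k, (v k)⁺ - ∑ k, (v k)⁻ = 0 := by
    simpa only [← sum_sub_distrib, posPart_sub_negPart] using hsum
  have htotal : ∑ k, (v k)⁺ + ∑ k, (v k)⁻ = 2 := by
    simpa only [← sum_add_distrib, posPart_add_negPart] using hnorm
  obtain ⟨p, hp⟩ := exists_eq_piSingle_of_sum_eq_one (fun k => posPart_nonneg (v k)) (by omega)
  obtain ⟨q, hq⟩ := exists_eq_piSingle_of_sum_eq_one (fun k => negPart_nonneg (v k)) (by omega)
  refine ⟨p, q, ?_, funext fun k => ?_⟩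
  · rintro rfl
    have hpos := congrFun hp p
    have hneg := congrFun hq p
    simp only [Pi.single_eq_same, posPart_def, negPart_def] at hpos hneg
    omega
  · rw [Pi.sub_apply, ← congrFun hp k, ← congrFun hq k, posPart_sub_negPart]

end PiSingle

section LatticeA

variable {n : ℕ}

lemma stdE_apply (i k : Fin (n + 1)) : stdE n i k = if k = i then 1 else 0 :=
  Pi.single_apply i 1 k

lemma sum_stdE (i : Fin (n + 1)) : ∑ k, stdE n i k = 1 := by
  simp [stdE]

lemma stdE_injective : Function.Injective (stdE n) := fun i j h => by
  simpa [stdE_apply] using congrFun h i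

lemma stdE_add_stdE_eq {a b c d : Fin (n + 1)} (h : stdE n a + stdE n b = stdE n c + stdE n d) :
    (a = c ∧ b = d) ∨ (a = d ∧ b = c) := by
  by_cases hac : a = c
  · subst hac
    exact .inl ⟨rfl, stdE_injective (add_left_cancel h)⟩
  by_cases had : a = d
  · subst had
    exact .inr ⟨rfl, stdE_injective (add_left_cancel (h.trans (add_comm _ _)))⟩
  have ha := congrFun h a
  simp only [Pi.add_apply, stdE_apply, hac, had, ↓reduceIte] at ha
  split_ifs at ha <;> omega

lemma eq_of_stdE_add_add_eq {a b c d e f : Fin (n + 1)}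
    (h : stdE n a + stdE n b + stdE n c = stdE n d + stdE n e + stdE n f)
    (had : a ≠ d) (hae : a ≠ e) : a = f := by
  have ha := congrFun h a
  simp only [Pi.add_apply, stdE_apply, had, hae, ↓reduceIte] at ha
  split_ifs at ha <;> omega

lemma sum_abs_stdE_sub_stdE {i j : Fin (n + 1)} (hij : i ≠ j) :
    ∑ k, |stdE n i k - stdE n j k| = 2 := by
  have hk : ∀ k, |stdE n i k - stdE n j k| = stdE n i k + stdE n j k := by
    intro k
    simp only [stdE_apply]
    split_ifs <;> simp_all
  simp only [hk, sum_add_distrib, sum_stdE]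
  norm_num

lemma IsCliqueA.exists_eq_add_stdE_sub_stdE {S : Set (Fin (n + 1) → ℤ)} (hS : IsCliqueA n S)
    {x y : Fin (n + 1) → ℤ} (hx : x ∈ S) (hy : y ∈ S) (hxy : x ≠ y) :
    ∃ p q, p ≠ q ∧ x = y + stdE n p - stdE n q := by
  have hsum : ∑ k, (x k - y k) = 0 := by
    rw [sum_sub_distrib, show ∑ k, x k = 0 from hS.1 hx, show ∑ k, y k = 0 from hS.1 hy,
      sub_zero]
  obtain ⟨p, q, hpq, hv⟩ :=
    exists_eq_piSingle_sub_piSingle (v := x - y) hsum (hS.2 x hx y hy hxy)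
  exact ⟨p, q, hpq, by rw [add_sub_assoc, stdE, stdE, ← hv, add_sub_cancel]⟩

lemma IsCliqueA.neg {S : Set (Fin (n + 1) → ℤ)} (hS : IsCliqueA n S) : IsCliqueA n (-S) := by
  refine ⟨fun x hx => ?_, fun x hx y hy hxy => ?_⟩
  · simpa [latticeASet] using hS.1 hx
  · convert hS.2 _ hx _ hy (neg_injective.ne hxy) using 2 with k
    rw [Pi.neg_apply, Pi.neg_apply, neg_sub_neg, abs_sub_comm]

/-- Writing `b = a + e_j - e_i` and `c = a + e_l - e_k`, adjacency of `b` and `c` forces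
`i = k` or `j = l`. -/
lemma IsCliqueA.exists_triangle_eq_add_stdE_or_sub_stdE {S : Set (Fin (n + 1) → ℤ)}
    (hS : IsCliqueA n S) {a b c : Fin (n + 1) → ℤ} (ha : a ∈ S) (hb : b ∈ S) (hc : c ∈ S)
    (hab : a ≠ b) (hac : a ≠ c) (hbc : b ≠ c) :
    ∃ x i j k, i ≠ j ∧ i ≠ k ∧ j ≠ k ∧
      ((a = x + stdE n i ∧ b = x + stdE n j ∧ c = x + stdE n k) ∨
        (a = x - stdE n i ∧ b = x - stdE n j ∧ c = x - stdE n k)) := by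
  obtain ⟨j, i, hji, hb'⟩ := hS.exists_eq_add_stdE_sub_stdE hb ha hab.symm
  obtain ⟨l, k, hlk, hc'⟩ := hS.exists_eq_add_stdE_sub_stdE hc ha hac.symm
  obtain ⟨r, s, -, hcb⟩ := hS.exists_eq_add_stdE_sub_stdE hc hb hbc.symm
  have hshared : i = k ∨ j = l := by
    by_contra! hne
    have hsum : stdE n l + stdE n i + stdE n s = stdE n k + stdE n j + stdE n r := by
      linear_combination hcb - hc' + hb'
    obtain rfl : l = r := eq_of_stdE_add_add_eq hsum hlk hne.2.symm
    have hpair : stdE n i + stdE n s = stdE n k + stdE n j := by linear_combination hsum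
    rcases stdE_add_stdE_eq hpair with ⟨hik, -⟩ | ⟨hij, -⟩
    exacts [hne.1 hik, hji hij.symm]
  rcases hshared with rfl | rfl
  · refine ⟨a - stdE n i, i, j, l, hji.symm, hlk.symm, ?_,
      .inl ⟨by abel, by linear_combination hb', by linear_combination hc'⟩⟩
    rintro rfl
    exact hbc (hb'.trans hc'.symm)
  · refine ⟨a + stdE n j, j, i, k, hji, hlk, ?_,
      .inr ⟨by abel, by linear_combination hb', by linear_combination hc'⟩⟩
    rintro rfl
    exact hbc (hb'.trans hc'.symm)

def upSimplex (n : ℕ) (x : Fin (n + 1) → ℤ) : Set (Fin (n + 1) → ℤ) :=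
  {y | ∃ i : Fin (n + 1), y = x + stdE n i}

def downSimplex (n : ℕ) (x : Fin (n + 1) → ℤ) : Set (Fin (n + 1) → ℤ) :=
  {y | ∃ i : Fin (n + 1), y = x - stdE n i}

lemma downSimplex_eq_neg_upSimplex (x : Fin (n + 1) → ℤ) :
    downSimplex n x = -upSimplex n (-x) := by
  ext y
  simp only [downSimplex, upSimplex, Set.mem_neg, Set.mem_ofPred_eq, neg_eq_iff_eq_neg, neg_add,
    neg_neg, sub_eq_add_neg]

/-- A point `d` adjacent to `x + e_i` but outside `upSimplex n x` is `x + e_i + e_p - e_q` with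
`q ≠ i`, so it exceeds `x` only in coordinates `i` and `p`; three such `i` cannot all fit. -/
lemma IsCliqueA.subset_upSimplex {S : Set (Fin (n + 1) → ℤ)} (hS : IsCliqueA n S)
    {x : Fin (n + 1) → ℤ} {i j k : Fin (n + 1)} (hij : i ≠ j) (hik : i ≠ k) (hjk : j ≠ k)
    (hi : x + stdE n i ∈ S) (hj : x + stdE n j ∈ S) (hk : x + stdE n k ∈ S) :
    S ⊆ upSimplex n x := by
  intro d hd
  by_contra hdx
  have hadj : ∀ m, x + stdE n m ∈ S →
      ∃ p q, q ≠ m ∧ d = x + stdE n m + stdE n p - stdE n q := by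
    intro m hm
    obtain ⟨p, q, -, hd'⟩ := hS.exists_eq_add_stdE_sub_stdE hd hm fun h => hdx ⟨m, h⟩
    refine ⟨p, q, ?_, hd'⟩
    rintro rfl
    exact hdx ⟨p, by linear_combination hd'⟩
  have hlt : ∀ m, x + stdE n m ∈ S → x m < d m := by
    intro m hm
    obtain ⟨p, q, hqm, hd'⟩ := hadj m hm
    simp only [hd', Pi.add_apply, Pi.sub_apply, stdE_apply, hqm.symm, ↓reduceIte]
    split_ifs <;> omega
  obtain ⟨p, q, -, hd'⟩ := hadj i hi
  have heq : ∀ m, m ≠ i → x m < d m → m = p := by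
    intro m hmi hm
    simp only [hd', Pi.add_apply, Pi.sub_apply, stdE_apply, hmi, ↓reduceIte] at hm
    split_ifs at hm <;> first | assumption | omega
  exact hjk ((heq j hij.symm (hlt j hj)).trans (heq k hik.symm (hlt k hk)).symm)

lemma IsCliqueA.subset_downSimplex {S : Set (Fin (n + 1) → ℤ)} (hS : IsCliqueA n S)
    {x : Fin (n + 1) → ℤ} {i j k : Fin (n + 1)} (hij : i ≠ j) (hik : i ≠ k) (hjk : j ≠ k)
    (hi : x - stdE n i ∈ S) (hj : x - stdE n j ∈ S) (hk : x - stdE n k ∈ S) :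
    S ⊆ downSimplex n x := by
  have hmem : ∀ m, x - stdE n m ∈ S → -x + stdE n m ∈ -S := fun m hm => by
    rwa [Set.mem_neg, neg_add, neg_neg, ← sub_eq_add_neg]
  rw [downSimplex_eq_neg_upSimplex, ← Set.neg_subset]
  exact hS.neg.subset_upSimplex hij hik hjk (hmem i hi) (hmem j hj) (hmem k hk)

lemma isCliqueA_upSimplex {x : Fin (n + 1) → ℤ} (hx : ∑ k, x k = -1) :
    IsCliqueA n (upSimplex n x) := by
  refine ⟨?_, ?_⟩
  · rintro y ⟨i, rfl⟩
    simp only [latticeASet, Set.mem_ofPred_eq, Pi.add_apply, sum_add_distrib, hx, sum_stdE]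
    norm_num
  · rintro y ⟨i, rfl⟩ z ⟨j, rfl⟩ hyz
    have hij : i ≠ j := by rintro rfl; exact hyz rfl
    simpa only [Pi.add_apply, add_sub_add_left_eq_sub] using sum_abs_stdE_sub_stdE hij

lemma isCliqueA_downSimplex {x : Fin (n + 1) → ℤ} (hx : ∑ k, x k = 1) :
    IsCliqueA n (downSimplex n x) := by
  rw [downSimplex_eq_neg_upSimplex]
  exact (isCliqueA_upSimplex (by simp [hx])).neg

lemma upSimplex_eq_range (x : Fin (n + 1) → ℤ) :
    upSimplex n x = Set.range fun i => x + stdE n i := by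
  ext y
  simp only [upSimplex, Set.mem_ofPred_eq, Set.mem_range, eq_comm]

lemma ncard_upSimplex (x : Fin (n + 1) → ℤ) : (upSimplex n x).ncard = n + 1 := by
  rw [upSimplex_eq_range, Set.ncard_range_of_injective (f := fun i => x + stdE n i)
    ((add_right_injective x).comp stdE_injective), Nat.card_fin]

lemma ncard_downSimplex (x : Fin (n + 1) → ℤ) : (downSimplex n x).ncard = n + 1 := by
  rw [downSimplex_eq_neg_upSimplex, Set.ncard_neg, ncard_upSimplex]

lemma upSimplex_injective (hn : n ≠ 0) : Function.Injective (upSimplex n) := by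
  intro x y hxy
  have hmem : ∀ i, ∃ p, x + stdE n i = y + stdE n p := fun i =>
    (hxy ▸ ⟨i, rfl⟩ : x + stdE n i ∈ upSimplex n y)
  obtain ⟨p, hp⟩ := hmem 0
  obtain ⟨q, hq⟩ := hmem (Fin.last n)
  by_cases hp0 : p = 0
  · subst hp0
    exact add_right_cancel hp
  -- evaluating at `0`: `(x - y) 0` is `-1` by the first equation but nonnegative by the second
  have h0 : (x + stdE n 0) 0 - (x + stdE n (Fin.last n)) 0 =
      (y + stdE n p) 0 - (y + stdE n q) 0 := by
    rw [hp, hq]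
  have hlast : (0 : Fin (n + 1)) ≠ Fin.last n := fun h =>
    hn (by simpa using (congrArg Fin.val h).symm)
  simp only [Pi.add_apply, stdE_apply, hlast, Ne.symm hp0, ↓reduceIte] at h0
  split_ifs at h0 <;> omega

lemma downSimplex_injective (hn : n ≠ 0) : Function.Injective (downSimplex n) := fun x y hxy =>
  neg_injective <| upSimplex_injective hn <| neg_injective <| by
    simpa only [downSimplex_eq_neg_upSimplex] using hxy

def IsSimplexA (n : ℕ) (C : Set (Fin (n + 1) → ℤ)) : Prop :=
  (∃ x, ∑ k, x k = -1 ∧ C = upSimplex n x) ∨ (∃ x, ∑ k, x k = 1 ∧ C = downSimplex n x)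

lemma IsSimplexA.isCliqueA {C : Set (Fin (n + 1) → ℤ)} (hC : IsSimplexA n C) :
    IsCliqueA n C := by
  rcases hC with ⟨x, hx, rfl⟩ | ⟨x, hx, rfl⟩
  exacts [isCliqueA_upSimplex hx, isCliqueA_downSimplex hx]

lemma IsSimplexA.ncard_eq {C : Set (Fin (n + 1) → ℤ)} (hC : IsSimplexA n C) :
    C.ncard = n + 1 := by
  rcases hC with ⟨x, -, rfl⟩ | ⟨x, -, rfl⟩
  exacts [ncard_upSimplex x, ncard_downSimplex x]

lemma IsCliqueA.exists_isSimplexA_forall_subset {S : Set (Fin (n + 1) → ℤ)} (hS : IsCliqueA n S)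
    {a b c : Fin (n + 1) → ℤ} (ha : a ∈ S) (hb : b ∈ S) (hc : c ∈ S)
    (hab : a ≠ b) (hac : a ≠ c) (hbc : b ≠ c) :
    ∃ C, IsSimplexA n C ∧ ∀ T, IsCliqueA n T → {a, b, c} ⊆ T → T ⊆ C := by
  obtain ⟨x, i, j, k, hij, hik, hjk, ⟨rfl, rfl, rfl⟩ | ⟨rfl, rfl, rfl⟩⟩ :=
    hS.exists_triangle_eq_add_stdE_or_sub_stdE ha hb hc hab hac hbc
  · have hx : ∑ k, x k = -1 := by
      have := hS.1 ha
      simp only [latticeASet, Set.mem_ofPred_eq, Pi.add_apply, sum_add_distrib, sum_stdE] at this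
      omega
    refine ⟨upSimplex n x, .inl ⟨x, hx, rfl⟩, fun T hT hsub => ?_⟩
    exact hT.subset_upSimplex hij hik hjk (hsub (by simp)) (hsub (by simp)) (hsub (by simp))
  · have hx : ∑ k, x k = 1 := by
      have := hS.1 ha
      simp only [latticeASet, Set.mem_ofPred_eq, Pi.sub_apply, sum_sub_distrib, sum_stdE] at this
      omega
    refine ⟨downSimplex n x, .inr ⟨x, hx, rfl⟩, fun T hT hsub => ?_⟩
    exact hT.subset_downSimplex hij hik hjk (hsub (by simp)) (hsub (by simp)) (hsub (by simp))

lemma isMaxCliqueA_of_forall_subset {T C : Set (Fin (n + 1) → ℤ)} (hC : IsCliqueA n C)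
    (hTC : T ⊆ C) (h : ∀ S, IsCliqueA n S → T ⊆ S → S ⊆ C) : IsMaxCliqueA n C :=
  ⟨hC, fun S hS hCS => (h S hS (hTC.trans hCS)).antisymm hCS⟩

end LatticeA

/-- Every maximal clique of size `≥ 3` in the distance-2 graph on `Aₙ` is of
the form `{x + eᵢ}` for a unique `x` of coordinate sum `-1`, or `{x - eᵢ}` for
a unique `x` of coordinate sum `1`; and every 3-element clique is contained in
a unique maximal clique, which has `n + 1` elements. -/
theorem stmt_12 (n : ℕ) :
    (∀ S : Set (Fin (n + 1) → ℤ), IsMaxCliqueA n S → 3 ≤ S.ncard →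
      (∃! x : Fin (n + 1) → ℤ, ∑ i, x i = -1 ∧
        S = {y | ∃ i : Fin (n + 1), y = x + stdE n i}) ∨
      (∃! x : Fin (n + 1) → ℤ, ∑ i, x i = 1 ∧
        S = {y | ∃ i : Fin (n + 1), y = x - stdE n i})) ∧
    (∀ T : Set (Fin (n + 1) → ℤ), IsCliqueA n T → T.ncard = 3 →
      ∃! M : Set (Fin (n + 1) → ℤ),
        IsMaxCliqueA n M ∧ T ⊆ M ∧ M.ncard = n + 1) := by
  refine ⟨fun S hS h3 => ?_, fun T hT h3 => ?_⟩
  · obtain ⟨a, b, c, ha, hb, hc, hab, hac, hbc⟩ :=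
      (Set.two_lt_ncard_iff (Set.finite_of_ncard_pos (by omega))).1 h3
    obtain ⟨C, hC, hCS⟩ := hS.1.exists_isSimplexA_forall_subset ha hb hc hab hac hbc
    obtain rfl : C = S :=
      hS.2 C hC.isCliqueA (hCS S hS.1 (by simp [Set.insert_subset_iff, ha, hb, hc]))
    have hn : n ≠ 0 := by have := hC.ncard_eq; omega
    rcases hC with ⟨x, hx, rfl⟩ | ⟨x, hx, rfl⟩
    · exact .inl ⟨x, ⟨hx, rfl⟩, fun y ⟨_, hy⟩ => upSimplex_injective hn hy.symm⟩
    · exact .inr ⟨x, ⟨hx, rfl⟩, fun y ⟨_, hy⟩ => downSimplex_injective hn hy.symm⟩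
  · obtain ⟨a, b, c, hab, hac, hbc, rfl⟩ := Set.ncard_eq_three.1 h3
    obtain ⟨C, hC, hCS⟩ :=
      hT.exists_isSimplexA_forall_subset (by simp) (by simp) (by simp) hab hac hbc
    have hTC := hCS _ hT subset_rfl
    exact ⟨C, ⟨isMaxCliqueA_of_forall_subset hC.isCliqueA hTC hCS, hTC, hC.ncard_eq⟩,
      fun M ⟨hM, hTM, _⟩ => (hM.2 C hC.isCliqueA (hCS M hM.1 hTM)).symm⟩
end

section
/- Let B = {0, b₁, …, b_k} be a Sidon set of order 2 in an abelian group G generating G. Then L = {x ∈ A_k : Σᵢ xᵢ bᵢ = 0} is a subgroup of A_k such that the balls of radius 1 (in the metric d(x,y) = ‖x-y‖₁/2) centered at elements of L are pairwise disjoint, and A_k / L ≅ G. -/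
/-!
If `x ≠ y` in `L` lie within distance 1 of a common point, then `w = x - y` is a nonzero
vector of `Aₖ` with `Σ wᵢ bᵢ = 0` and `‖w‖₁ ≤ 4`. Its positive and negative parts are two
multisets of indices of the same size at most 2 with equal `b`-sums and disjoint supports;
the Sidon property forces equal multisets, hence `w = 0`. The quotient is `G` because
`eⱼ - e₀ ↦ bⱼ` and the `bⱼ` generate `G`.
-/

/-- The lattice `Aₖ = {x ∈ ℤ^{k+1} : Σᵢ xᵢ = 0}`. -/
def latticeA (k : ℕ) : AddSubgroup (Fin (k + 1) → ℤ) :=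
  AddMonoidHom.ker
    (AddMonoidHom.mk' (fun x => ∑ i, x i)
      (by intro a b; simp [Finset.sum_add_distrib]))

/-- The homomorphism `Aₖ → G`, `x ↦ Σᵢ xᵢ bᵢ`. -/
def sidonHom (k : ℕ) {G : Type*} [AddCommGroup G] (b : Fin (k + 1) → G) :
    latticeA k →+ G :=
  AddMonoidHom.mk' (fun x => ∑ i, (x : Fin (k + 1) → ℤ) i • b i)
    (by
      intro x y
      rw [← Finset.sum_add_distrib]
      refine Finset.sum_congr rfl fun i _ => ?_
      simp [add_zsmul])

section

variable {ι G : Type*} [AddCommGroup G]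

def countMultiset [Fintype ι] (f : ι → ℕ) : Multiset ι := ∑ i, Multiset.replicate (f i) i

section

variable [Fintype ι] (f : ι → ℕ)

theorem card_countMultiset : Multiset.card (countMultiset f) = ∑ i, f i := by
  simp [countMultiset]

theorem mem_countMultiset {i : ι} : i ∈ countMultiset f ↔ f i ≠ 0 := by
  simp [countMultiset, Multiset.mem_sum, Multiset.mem_replicate]

theorem sum_map_countMultiset (b : ι → G) :
    ((countMultiset f).map b).sum = ∑ i, f i • b i := by
  refine (map_sum (Multiset.sumAddMonoidHom.comp (Multiset.mapAddMonoidHom b)) _ _).trans ?_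
  simp

end

def IsSidonFamily (b : ι → G) : Prop :=
  ∀ i j i' j', i ≠ j → i' ≠ j' → b i - b j = b i' - b j' → i = i' ∧ j = j'

namespace IsSidonFamily

variable {b : ι → G}

theorem injective (hb : IsSidonFamily b) : Function.Injective b := by
  intro i j h
  by_contra hij
  exact hij (hb i j j i hij (Ne.symm hij) (by rw [h])).1

theorem eq_or_eq_of_add_eq_add (hb : IsSidonFamily b) {i i' j j' : ι}
    (h : b i + b i' = b j + b j') :
    (i = j ∧ i' = j') ∨ (i = j' ∧ i' = j) := by
  by_cases hij : i = j
  · subst hij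
    exact Or.inl ⟨rfl, hb.injective (add_left_cancel h)⟩
  · have hj'i' : j' ≠ i' := by
      rintro rfl
      exact hij (hb.injective (add_right_cancel h))
    obtain ⟨rfl, rfl⟩ :=
      hb i j j' i' hij hj'i' (sub_eq_sub_iff_add_eq_add.2 (by rw [h, add_comm]))
    exact Or.inr ⟨rfl, rfl⟩

theorem multiset_eq_of_sum_map_eq (hb : IsSidonFamily b) {P N : Multiset ι}
    (hcard : Multiset.card P = Multiset.card N) (hle : Multiset.card P ≤ 2)
    (hsum : (P.map b).sum = (N.map b).sum) : P = N := by
  rcases (by omega : Multiset.card P = 0 ∨ Multiset.card P = 1 ∨ Multiset.card P = 2)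
    with h | h | h
  · rw [Multiset.card_eq_zero.1 h, Multiset.card_eq_zero.1 (hcard.symm.trans h)]
  · obtain ⟨i, rfl⟩ := Multiset.card_eq_one.1 h
    obtain ⟨j, rfl⟩ := Multiset.card_eq_one.1 (hcard.symm.trans h)
    simp only [Multiset.map_singleton, Multiset.sum_singleton] at hsum
    rw [hb.injective hsum]
  · obtain ⟨i, i', rfl⟩ := Multiset.card_eq_two.1 h
    obtain ⟨j, j', rfl⟩ := Multiset.card_eq_two.1 (hcard.symm.trans h)
    simp only [Multiset.insert_eq_cons, Multiset.map_cons, Multiset.map_singleton,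
      Multiset.sum_cons, Multiset.sum_singleton] at hsum
    rcases hb.eq_or_eq_of_add_eq_add hsum with ⟨rfl, rfl⟩ | ⟨rfl, rfl⟩
    · rfl
    · exact Multiset.pair_comm _ _

theorem eq_zero_of_sum_zsmul_eq_zero [Fintype ι] (hb : IsSidonFamily b) {w : ι → ℤ}
    (hw : ∑ i, w i = 0) (hw4 : ∑ i, |w i| ≤ 4) (hwb : ∑ i, w i • b i = 0) : w = 0 := by
  set P := countMultiset fun i => (w i).toNat
  set N := countMultiset fun i => (-w i).toNat
  have hcard : Multiset.card P = Multiset.card N := by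
    rw [← Int.natCast_inj, card_countMultiset, card_countMultiset, ← sub_eq_zero]
    push_cast
    rw [← Finset.sum_sub_distrib, ← hw]
    simp only [Int.toNat_sub_toNat_neg]
  have hle : Multiset.card P + Multiset.card N ≤ 4 := by
    rw [← Int.ofNat_le, card_countMultiset, card_countMultiset]
    push_cast
    rw [← Finset.sum_add_distrib]
    refine le_of_eq_of_le (Finset.sum_congr rfl fun i _ => ?_) hw4
    rw [Int.abs_eq_natAbs]
    omega
  have hsum : (P.map b).sum = (N.map b).sum := by
    rw [← sub_eq_zero, sum_map_countMultiset, sum_map_countMultiset, ← Finset.sum_sub_distrib,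
      ← hwb]
    refine Finset.sum_congr rfl fun i _ => ?_
    rw [← natCast_zsmul, ← natCast_zsmul, ← sub_smul, Int.toNat_sub_toNat_neg]
  have hPN := hb.multiset_eq_of_sum_map_eq hcard (by omega) hsum
  funext i
  have hiff : (w i).toNat ≠ 0 ↔ (-w i).toNat ≠ 0 := by
    rw [← mem_countMultiset (fun i => (w i).toNat), ← mem_countMultiset (fun i => (-w i).toNat)]
    exact Eq.to_iff (congrArg (i ∈ ·) hPN)
  rw [Pi.zero_apply]
  omega

end IsSidonFamily

theorem sum_abs_sub_le_add {α : Type*} [AddCommGroup α] [LinearOrder α] [IsOrderedAddMonoid α]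
    [Fintype ι] (x y z : ι → α) :
    ∑ i, |x i - y i| ≤ ∑ i, |x i - z i| + ∑ i, |y i - z i| := by
  rw [← Finset.sum_add_distrib]
  exact Finset.sum_le_sum fun i _ => (abs_sub_le _ (z i) _).trans_eq (by rw [abs_sub_comm (z i)])

theorem mem_latticeA {k : ℕ} {x : Fin (k + 1) → ℤ} : x ∈ latticeA k ↔ ∑ i, x i = 0 :=
  Iff.rfl

theorem sidonHom_apply (k : ℕ) (b : Fin (k + 1) → G) (x : latticeA k) :
    sidonHom k b x = ∑ i, (x : Fin (k + 1) → ℤ) i • b i := rfl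

theorem sidonHom_surjective {k : ℕ} {b : Fin (k + 1) → G} (hb0 : b 0 = 0)
    (hgen : AddSubgroup.closure (Set.range b) = ⊤) : Function.Surjective (sidonHom k b) := by
  rw [← AddMonoidHom.range_eq_top, eq_top_iff, ← hgen, AddSubgroup.closure_le]
  rintro _ ⟨j, rfl⟩
  refine ⟨⟨Pi.single j 1 - Pi.single 0 1, ?_⟩, ?_⟩
  · simp [mem_latticeA, Finset.sum_sub_distrib]
  · simp [sidonHom_apply, sub_smul, Finset.sum_sub_distrib, hb0]

end

theorem stmt_14_general (k : ℕ) {G : Type*} [AddCommGroup G] (b : Fin (k + 1) → G)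
    (hb0 : b 0 = 0)
    (hsidon : ∀ i j i' j' : Fin (k + 1), i ≠ j → i' ≠ j' →
      b i - b j = b i' - b j' → i = i' ∧ j = j')
    (hgen : AddSubgroup.closure (Set.range b) = ⊤) :
    (∀ x ∈ (sidonHom k b).ker, ∀ y ∈ (sidonHom k b).ker, x ≠ y →
      ∀ z : latticeA k,
        ¬(∑ i, |(x : Fin (k + 1) → ℤ) i - (z : Fin (k + 1) → ℤ) i| ≤ 2 ∧
          ∑ i, |(y : Fin (k + 1) → ℤ) i - (z : Fin (k + 1) → ℤ) i| ≤ 2)) ∧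
    Nonempty ((latticeA k ⧸ (sidonHom k b).ker) ≃+ G) := by
  refine ⟨fun x hx y hy hxy z ⟨hxz, hyz⟩ => hxy ?_,
    ⟨QuotientAddGroup.quotientKerEquivOfSurjective _ (sidonHom_surjective hb0 hgen)⟩⟩
  have hw : ((x - y : latticeA k) : Fin (k + 1) → ℤ) = 0 := by
    refine IsSidonFamily.eq_zero_of_sum_zsmul_eq_zero hsidon (mem_latticeA.1 (x - y).2) ?_
      ((sidonHom k b).mem_ker.1 (sub_mem hx hy))
    have := sum_abs_sub_le_add (x : Fin (k + 1) → ℤ) y z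
    simp only [AddSubgroup.coe_sub, Pi.sub_apply]
    omega
  exact sub_eq_zero.1 (Subtype.ext hw)

/-- From a generating Sidon set `B = {0, b₁, …, b_k}` of order 2 in `G`, the
lattice `L = {x ∈ Aₖ : Σᵢ xᵢ bᵢ = 0}` is a linear code of radius 1 in `Aₖ`
(balls of radius 1 around its points are pairwise disjoint), with
`Aₖ / L ≅ G`. -/
theorem stmt_14 (k : ℕ) {G : Type*} [AddCommGroup G] (b : Fin (k + 1) → G)
    (hb0 : b 0 = 0) (hbinj : Function.Injective b)
    (hsidon : ∀ i j i' j' : Fin (k + 1), i ≠ j → i' ≠ j' →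
      b i - b j = b i' - b j' → i = i' ∧ j = j')
    (hgen : AddSubgroup.closure (Set.range b) = ⊤) :
    (∀ x ∈ (sidonHom k b).ker, ∀ y ∈ (sidonHom k b).ker, x ≠ y →
      ∀ z : latticeA k,
        ¬(∑ i, |(x : Fin (k + 1) → ℤ) i - (z : Fin (k + 1) → ℤ) i| ≤ 2 ∧
          ∑ i, |(y : Fin (k + 1) → ℤ) i - (z : Fin (k + 1) → ℤ) i| ≤ 2)) ∧
    Nonempty ((latticeA k ⧸ (sidonHom k b).ker) ≃+ G) :=
  stmt_14_general k b hb0 hsidon hgen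
end

section
/- Let L ≤ A_k be a subgroup such that the vectors eᵢ - eⱼ (i ≠ j, i, j ∈ [k+1]) are pairwise distinct and nonzero modulo L. Then the images of e₁ - e_{k+1}, …, e_k - e_{k+1}, 0 in G = A_k / L form a Sidon set of order 2 of size k+1 generating G. -/
/-- The element `eᵢ - eⱼ` of `Aₖ`. -/
def eij (k : ℕ) (i j : Fin (k + 1)) : latticeA k :=
  ⟨Pi.single i (1 : ℤ) - Pi.single j 1, by
    simp only [latticeA, AddMonoidHom.mem_ker, AddMonoidHom.mk'_apply,
      Pi.sub_apply]
    simp [Finset.sum_sub_distrib]⟩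

/-! Idea: the differences of the images of `eᵢ - e_{k+1}` are the images of `eᵢ - eⱼ`, so the
Sidon property is exactly the hypothesis on the `eᵢ - eⱼ`; and the `eᵢ - e_{k+1}` already
generate `Aₖ`, since `x = Σᵢ xᵢ (eᵢ - e_{k+1})` whenever `Σᵢ xᵢ = 0`. -/

section Lattice

variable {k : ℕ}

@[simp]
lemma coe_eij (i j : Fin (k + 1)) :
    (eij k i j : Fin (k + 1) → ℤ) = Pi.single i 1 - Pi.single j 1 := rfl

lemma sum_coe_latticeA (x : latticeA k) : ∑ i, (x : Fin (k + 1) → ℤ) i = 0 := x.2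

@[simp]
lemma eij_self (i : Fin (k + 1)) : eij k i i = 0 := by
  ext; simp

lemma eij_sub_eij (i j l : Fin (k + 1)) : eij k i l - eij k j l = eij k i j := by
  ext; simp

lemma sum_zsmul_eij (x : latticeA k) (l : Fin (k + 1)) :
    ∑ i, (x : Fin (k + 1) → ℤ) i • eij k i l = x := by
  ext m
  simp only [AddSubgroup.val_finsetSum, AddSubgroup.coe_zsmul, coe_eij, smul_sub,
    Finset.sum_sub_distrib, ← Finset.sum_smul, sum_coe_latticeA, zero_smul, sub_zero]
  simp [Pi.single_apply]

lemma closure_range_eij_eq_top (l : Fin (k + 1)) :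
    AddSubgroup.closure (Set.range fun i => eij k i l) = ⊤ := by
  refine eq_top_iff.mpr fun x _ => ?_
  rw [← sum_zsmul_eij x l]
  exact sum_mem fun i _ => zsmul_mem (AddSubgroup.subset_closure (Set.mem_range_self i)) _

end Lattice

lemma AddSubgroup.closure_image_eq_top {G H : Type*} [AddGroup G] [AddGroup H] {f : G →+ H}
    (hf : Function.Surjective f) {s : Set G} (hs : AddSubgroup.closure s = ⊤) :
    AddSubgroup.closure (f '' s) = ⊤ := by
  rw [← AddMonoidHom.map_closure, hs, AddSubgroup.map_top_of_surjective f hf]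

section Quotient

variable {k : ℕ} {L : AddSubgroup (latticeA k)}

lemma injective_mk_eij
    (hdistinct : ∀ i j i' j' : Fin (k + 1), i ≠ j → i' ≠ j' →
      QuotientAddGroup.mk' L (eij k i j) = QuotientAddGroup.mk' L (eij k i' j') →
      i = i' ∧ j = j')
    (hnonzero : ∀ i j : Fin (k + 1), i ≠ j → QuotientAddGroup.mk' L (eij k i j) ≠ 0)
    (l : Fin (k + 1)) :
    Function.Injective fun i => QuotientAddGroup.mk' L (eij k i l) := by
  intro i j h
  by_contra hij
  -- if `i` or `j` equals `l`, one side vanishes and the other is the image of a nonzero `eᵢ - eⱼ`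
  rcases eq_or_ne i l with rfl | hi
  · exact hnonzero j i (Ne.symm hij) (by simpa using h.symm)
  rcases eq_or_ne j l with rfl | hj
  · exact hnonzero i j hij (by simpa using h)
  exact hij (hdistinct i l j l hi hj h).1

end Quotient

/-- If the vectors `eᵢ - eⱼ` (`i ≠ j`) are pairwise distinct and nonzero modulo
a subgroup `L ≤ Aₖ`, then the images of `e₁ - e_{k+1}, …, e_k - e_{k+1}, 0` in
`G = Aₖ / L` form a Sidon set of order 2 of size `k + 1` generating `G`. -/
theorem stmt_15 (k : ℕ) (L : AddSubgroup (latticeA k))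
    (hdistinct : ∀ i j i' j' : Fin (k + 1), i ≠ j → i' ≠ j' →
      QuotientAddGroup.mk' L (eij k i j) = QuotientAddGroup.mk' L (eij k i' j') →
      i = i' ∧ j = j')
    (hnonzero : ∀ i j : Fin (k + 1), i ≠ j →
      QuotientAddGroup.mk' L (eij k i j) ≠ 0) :
    Function.Injective
      (fun i : Fin (k + 1) => QuotientAddGroup.mk' L (eij k i (Fin.last k))) ∧
    (∀ i j i' j' : Fin (k + 1), i ≠ j → i' ≠ j' →
      QuotientAddGroup.mk' L (eij k i (Fin.last k)) -
          QuotientAddGroup.mk' L (eij k j (Fin.last k)) =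
        QuotientAddGroup.mk' L (eij k i' (Fin.last k)) -
          QuotientAddGroup.mk' L (eij k j' (Fin.last k)) →
      i = i' ∧ j = j') ∧
    AddSubgroup.closure
      (Set.range fun i : Fin (k + 1) =>
        QuotientAddGroup.mk' L (eij k i (Fin.last k))) = ⊤ := by
  refine ⟨injective_mk_eij hdistinct hnonzero _, fun i j i' j' hij hij' h => ?_, ?_⟩
  · rw [← map_sub, ← map_sub, eij_sub_eij, eij_sub_eij] at h
    exact hdistinct i j i' j' hij hij' h
  · rw [Set.range_comp' (QuotientAddGroup.mk' L) fun i => eij k i (Fin.last k)]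
    exact AddSubgroup.closure_image_eq_top (QuotientAddGroup.mk'_surjective L)
      (closure_range_eij_eq_top _)
end
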